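/- arXiv:2406.05861 — 3 statements merged into one kernel-verified Lean document; each statement's English description precedes it below -/
import Mathlib

section
/- There exists a simple polygon P in the Euclidean plane whose vertices have pairwise geodesic distance at least 1, such that every vertex guard set of P contains two distinct guards g, h with geodesic distance δ(g,h) at most 2; that is, no vertex guard set of P has dispersion distance greater than 2. -/
open Set Metric
open scoped ENNReal

noncomputable section

/-- The Euclidean plane. -/
abbrev Plane : Type := EuclideanSpace ℝ (Fin 2)

/-- A *simple polygon*: the compact region of the plane bounded by a simple
closed polygonal curve, together with the cyclic sequence of vertices of that
curve.  The field `carrier` is the region (boundary included); the field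
`frontier_eq` states that the topological boundary of the region is exactly
the closed polygonal curve through the vertices, and the fields
`edges_adjacent`/`edges_disjoint` state that this curve is simple. -/
structure SimplePolygon where
  /-- the number of vertices -/
  n : ℕ
  /-- a polygon has at least three vertices -/
  three_le : 3 ≤ n
  /-- the vertices, in cyclic order along the boundary curve -/
  vertex : ZMod n → Plane
  /-- the compact region bounded by the polygonal curve -/
  carrier : Set Plane
  isCompact : IsCompact carrier
  isConnected : IsConnected carrier
  /-- the region is the closure of its interior (it is a genuine
  two-dimensional region) -/
  regular : carrier = closure (interior carrier)
  /-- the topological boundary of the region is the union of the edges of the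
  closed polygonal curve through the vertices -/
  frontier_eq : frontier carrier = ⋃ i : ZMod n, segment ℝ (vertex i) (vertex (i + 1))
  /-- the vertices are pairwise distinct -/
  vertex_injective : Function.Injective vertex
  /-- consecutive edges of the curve meet exactly in their common vertex -/
  edges_adjacent : ∀ i : ZMod n,
    segment ℝ (vertex i) (vertex (i + 1)) ∩ segment ℝ (vertex (i + 1)) (vertex (i + 2)) =
      {vertex (i + 1)}
  /-- non-adjacent edges of the curve are disjoint -/
  edges_disjoint : ∀ i j : ZMod n, i ≠ j → i + 1 ≠ j → j + 1 ≠ i →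
    Disjoint (segment ℝ (vertex i) (vertex (i + 1))) (segment ℝ (vertex j) (vertex (j + 1)))

/-- The geodesic distance between `p` and `q` inside the set `P`: the infimum
of the lengths (total variations) of continuous paths from `p` to `q` staying
in `P`.  (Non-rectifiable paths have length `∞` and hence do not contribute.) -/
def geodesicDist (P : Set Plane) (p q : Plane) : ℝ≥0∞ :=
  ⨅ (γ : ℝ → Plane) (_ : ContinuousOn γ (Icc 0 1)) (_ : γ 0 = p) (_ : γ 1 = q)
    (_ : MapsTo γ (Icc 0 1) P), eVariationOn γ (Icc 0 1)

/-- `p` sees `q` within `P` if the closed segment `[p,q]` is contained in `P`. -/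
def Sees (P : Set Plane) (p q : Plane) : Prop :=
  segment ℝ p q ⊆ P

/-- `G` is a guard set for `P` if `G ⊆ P` and every point of `P` is seen by
some point of `G`. -/
def IsGuardSet (P : Set Plane) (G : Set Plane) : Prop :=
  G ⊆ P ∧ ∀ x ∈ P, ∃ g ∈ G, Sees P g x

/-- A vertex guard set of a simple polygon: a guard set consisting of
vertices of the polygon. -/
def SimplePolygon.IsVertexGuardSet (P : SimplePolygon) (G : Set Plane) : Prop :=
  G ⊆ Set.range P.vertex ∧ IsGuardSet P.carrier G

/-- The dispersion distance of a guard set `G` in `P`: the infimum of the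
geodesic distances between pairs of distinct guards. -/
def dispersionDist (P : Set Plane) (G : Set Plane) : ℝ≥0∞ :=
  ⨅ (g : Plane) (_ : g ∈ G) (h : Plane) (_ : h ∈ G) (_ : g ≠ h), geodesicDist P g h

/-- The vertex `P.vertex i` is *reflex* (interior angle strictly greater than
`180°`): sufficiently close to the vertex, the segment joining a point of the
incoming edge to a point of the outgoing edge (both distinct from the vertex)
always leaves the polygon. -/
def SimplePolygon.IsReflexAt (P : SimplePolygon) (i : ZMod P.n) : Prop :=
  ∃ δ > (0 : ℝ), ∀ a ∈ segment ℝ (P.vertex (i - 1)) (P.vertex i),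
    ∀ c ∈ segment ℝ (P.vertex i) (P.vertex (i + 1)),
      a ≠ P.vertex i → c ≠ P.vertex i →
      dist a (P.vertex i) < δ → dist c (P.vertex i) < δ →
      ¬ segment ℝ a c ⊆ P.carrier

/-- The vertices of `P` are labeled in counterclockwise order: the shoelace
signed area of the vertex cycle is positive. -/
def SimplePolygon.IsCCW (P : SimplePolygon) : Prop :=
  0 < ∑ i ∈ Finset.range P.n,
    (P.vertex (i : ZMod P.n) 0 * P.vertex ((i : ZMod P.n) + 1) 1 -
      P.vertex ((i : ZMod P.n) + 1) 0 * P.vertex (i : ZMod P.n) 1)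

/-! The polygon is the rectangle `[-1, 4] × [-1, 0]` with three equilateral teeth of side `1`
erected on `[0, 1]`, `[1, 2]` and `[2, 3]`. Its eleven vertices are pairwise at Euclidean, hence
geodesic, distance at least `1`. A point seeing the apex of a tooth lies in the wedge cut out by the
lines through the two sides of that tooth, and the only vertices in that wedge are the three corners
of the tooth. Hence a vertex guard set contains a vertex `gₖ` of each tooth `k = 0, 1, 2`. Since
teeth `0` and `2` are disjoint, `g₀ ≠ g₁` or `g₁ ≠ g₂`, and two points of adjacent teeth are joined
inside the polygon through the common corner of the teeth by two segments of length at most `1`. -/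

open AffineMap Filter Topology

lemma edist_le_geodesicDist (C : Set Plane) (p q : Plane) : edist p q ≤ geodesicDist C p q := by
  refine le_iInf fun γ => le_iInf fun _ => le_iInf fun hγ₀ => le_iInf fun hγ₁ => le_iInf fun _ => ?_
  rw [← hγ₀, ← hγ₁]
  exact eVariationOn.edist_le γ (left_mem_Icc.2 zero_le_one) (right_mem_Icc.2 zero_le_one)

lemma eVariationOn_lineMap_comp_le {E : Type*} [NormedAddCommGroup E] [NormedSpace ℝ E]
    (p q : E) {φ : ℝ → ℝ} {a b : ℝ} (hab : a ≤ b) (hφ : MonotoneOn φ (Icc a b))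
    (ha : φ a = 0) (hb : φ b = 1) :
    eVariationOn (lineMap p q ∘ φ) (Icc a b) ≤ edist p q := by
  calc eVariationOn (lineMap p q ∘ φ) (Icc a b)
      ≤ nndist p q * eVariationOn φ (Icc a b) :=
        (lipschitzWith_lineMap p q).lipschitzOnWith.comp_eVariationOn_le (mapsTo_univ _ _)
    _ = nndist p q * ENNReal.ofReal (φ b - φ a) := by
        rw [← hφ.eVariationOn_eq (left_mem_Icc.2 hab) (right_mem_Icc.2 hab), inter_self]
    _ = edist p q := by rw [ha, hb, sub_zero, ENNReal.ofReal_one, mul_one, edist_nndist]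

lemma geodesicDist_le_edist_add_edist {C : Set Plane} {p m q : Plane}
    (hpm : segment ℝ p m ⊆ C) (hmq : segment ℝ m q ⊆ C) :
    geodesicDist C p q ≤ edist p m + edist m q := by
  classical
  set γ : ℝ → Plane := fun t => if t ≤ 1 / 2 then lineMap p m (2 * t) else lineMap m q (2 * t - 1)
  have hγ : Continuous γ :=
    Continuous.if_le (by fun_prop) (by fun_prop) continuous_id continuous_const
      (fun t ht => by simp [ht])
  have hleft : EqOn γ (lineMap p m ∘ fun t => 2 * t) (Icc 0 (1 / 2)) := fun t ht =>
    if_pos ht.2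
  have hright : EqOn γ (lineMap m q ∘ fun t => 2 * t - 1) (Icc (1 / 2) 1) := fun t ht => by
    rcases ht.1.eq_or_lt with rfl | h
    · simp [γ]
    · exact if_neg (not_le.2 h)
  have hmaps : MapsTo γ (Icc 0 1) C := fun t ⟨ht₀, ht₁⟩ => by
    by_cases h : t ≤ 1 / 2
    · rw [hleft ⟨ht₀, h⟩]
      exact hpm (lineMap_mem_segment ℝ p m ⟨by linarith, by linarith⟩)
    · rw [hright ⟨(not_le.1 h).le, ht₁⟩]
      exact hmq (lineMap_mem_segment ℝ m q ⟨by linarith [not_le.1 h], by linarith⟩)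
  have hvar : eVariationOn γ (Icc 0 1) ≤ edist p m + edist m q := by
    have hsplit := eVariationOn.Icc_add_Icc γ (s := univ) (by norm_num : (0:ℝ) ≤ 1 / 2)
      (by norm_num : (1:ℝ) / 2 ≤ 1) (mem_univ _)
    simp only [univ_inter] at hsplit
    rw [← hsplit, eVariationOn.eq_of_eqOn hleft, eVariationOn.eq_of_eqOn hright]
    gcongr
    · exact eVariationOn_lineMap_comp_le p m (by norm_num)
        (fun x _ y _ hxy => by linarith) (by norm_num) (by norm_num)
    · exact eVariationOn_lineMap_comp_le m q (by norm_num)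
        (fun x _ y _ hxy => by linarith) (by norm_num) (by norm_num)
  calc geodesicDist C p q ≤ eVariationOn γ (Icc 0 1) :=
        iInf₂_le_of_le γ hγ.continuousOn <| iInf₂_le_of_le (by simp [γ]) (by norm_num [γ]) <|
          iInf_le_of_le hmaps le_rfl
    _ ≤ _ := hvar

namespace Plane

lemma dist_sq_eq (p q : Plane) : dist p q ^ 2 = (p 0 - q 0) ^ 2 + (p 1 - q 1) ^ 2 := by
  rw [EuclideanSpace.dist_eq, Real.sq_sqrt (by positivity), Fin.sum_univ_two, Real.dist_eq,
    Real.dist_eq, sq_abs, sq_abs]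

lemma lineMap_apply_coord (p q : Plane) (t : ℝ) (i : Fin 2) :
    lineMap p q t i = p i + t * (q i - p i) := by
  simp [lineMap_apply]; ring

lemma mem_segment_iff {a b c d : ℝ} {p : Plane} :
    p ∈ segment ℝ !₂[a, b] !₂[c, d] ↔
      ∃ t ∈ Icc (0:ℝ) 1, p 0 = a + t * (c - a) ∧ p 1 = b + t * (d - b) := by
  rw [segment_eq_image_lineMap]
  constructor
  · rintro ⟨t, ht, rfl⟩
    exact ⟨t, ht, lineMap_apply_coord _ _ _ _, lineMap_apply_coord _ _ _ _⟩
  · rintro ⟨t, ht, h₀, h₁⟩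
    refine ⟨t, ht, ?_⟩
    ext i
    fin_cases i
    exacts [(lineMap_apply_coord _ _ _ _).trans h₀.symm,
      (lineMap_apply_coord _ _ _ _).trans h₁.symm]

lemma segment_inter_segment_eq_singleton {A B C : Plane}
    (h : (A 0 - B 0) * (C 1 - B 1) ≠ (A 1 - B 1) * (C 0 - B 0)) :
    segment ℝ A B ∩ segment ℝ B C = {B} := by
  refine Subset.antisymm ?_
    (singleton_subset_iff.2 ⟨right_mem_segment ℝ A B, left_mem_segment ℝ B C⟩)
  rintro z ⟨hzA, hzC⟩
  rw [segment_symm, segment_eq_image_lineMap] at hzA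
  rw [segment_eq_image_lineMap] at hzC
  obtain ⟨s, -, rfl⟩ := hzA
  obtain ⟨u, -, hu⟩ := hzC
  have h₀ := congrArg (· 0) hu
  have h₁ := congrArg (· 1) hu
  simp only [lineMap_apply_coord] at h₀ h₁
  have hs : s * ((A 0 - B 0) * (C 1 - B 1) - (A 1 - B 1) * (C 0 - B 0)) = 0 := by
    linear_combination (C 0 - B 0) * h₁ - (C 1 - B 1) * h₀
  rw [mul_eq_zero, sub_eq_zero] at hs
  simp [hs.resolve_right h]

lemma disjoint_segment_of_lt (i : Fin 2) {A B C D : Plane} (hAC : A i < C i) (hAD : A i < D i)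
    (hBC : B i < C i) (hBD : B i < D i) : Disjoint (segment ℝ A B) (segment ℝ C D) := by
  have coord : ∀ {P Q z : Plane}, z ∈ segment ℝ P Q → z i ∈ uIcc (P i) (Q i) :=
    fun ⟨a, b, ha, hb, hab, hz⟩ => by
      rw [← segment_eq_uIcc]; exact ⟨a, b, ha, hb, hab, by simp [← hz]⟩
  refine Set.disjoint_left.2 fun z hAB hCD => ?_
  have : max (A i) (B i) < min (C i) (D i) := max_lt (lt_min hAC hAD) (lt_min hBC hBD)
  linarith [(coord hAB).2, (coord hCD).1]

def regionUnderGraph (a b c : ℝ) (f : ℝ → ℝ) : Set Plane :=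
  {p | a ≤ p 0 ∧ p 0 ≤ b ∧ c ≤ p 1 ∧ p 1 ≤ f (p 0)}

section regionUnderGraph

variable {a b c : ℝ} {f : ℝ → ℝ}

lemma mk_mem_regionUnderGraph {x y : ℝ} :
    !₂[x, y] ∈ regionUnderGraph a b c f ↔ a ≤ x ∧ x ≤ b ∧ c ≤ y ∧ y ≤ f x :=
  Iff.rfl

lemma isClosed_regionUnderGraph (hf : Continuous f) : IsClosed (regionUnderGraph a b c f) := by
  simp only [regionUnderGraph, ofPred_and]
  exact (isClosed_le (by fun_prop) (by fun_prop)).inter <| (isClosed_le (by fun_prop)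
    (by fun_prop)).inter <| (isClosed_le (by fun_prop) (by fun_prop)).inter
    (isClosed_le (by fun_prop) (by fun_prop))

lemma interior_regionUnderGraph (hf : Continuous f) :
    interior (regionUnderGraph a b c f) = {p | a < p 0 ∧ p 0 < b ∧ c < p 1 ∧ p 1 < f (p 0)} := by
  apply Subset.antisymm
  · intro p hp
    obtain ⟨ε, hε, hball⟩ := Metric.isOpen_iff.1 isOpen_interior p hp
    have shift : ∀ u v : ℝ, u ^ 2 + v ^ 2 < ε ^ 2 →
        (!₂[p 0 + u, p 1 + v] : Plane) ∈ regionUnderGraph a b c f := fun u v h =>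
      interior_subset <| hball <| lt_of_pow_lt_pow_left₀ 2 hε.le <| by rw [dist_sq_eq]; simpa
    have hsq : (ε / 2) ^ 2 < ε ^ 2 := by nlinarith
    obtain ⟨-, hb, -, -⟩ := shift (ε / 2) 0 (by simpa using hsq)
    obtain ⟨ha, -, -, -⟩ := shift (-(ε / 2)) 0 (by simpa using hsq)
    obtain ⟨-, -, hc, -⟩ := shift 0 (-(ε / 2)) (by simpa using hsq)
    obtain ⟨-, -, -, hfp⟩ := shift 0 (ε / 2) (by simpa using hsq)
    simp only [Matrix.cons_val_zero, Matrix.cons_val_one, add_zero] at ha hb hc hfp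
    exact ⟨by linarith, by linarith, by linarith, by linarith⟩
  · refine interior_maximal (fun p hp => ⟨hp.1.le, hp.2.1.le, hp.2.2.1.le, hp.2.2.2.le⟩) ?_
    simp only [ofPred_and]
    exact (isOpen_lt (by fun_prop) (by fun_prop)).inter <| (isOpen_lt (by fun_prop)
      (by fun_prop)).inter <| (isOpen_lt (by fun_prop) (by fun_prop)).inter
      (isOpen_lt (by fun_prop) (by fun_prop))

lemma frontier_regionUnderGraph (hf : Continuous f) :
    frontier (regionUnderGraph a b c f) = {p | p ∈ regionUnderGraph a b c f ∧
      (p 0 = a ∨ p 0 = b ∨ p 1 = c ∨ p 1 = f (p 0))} := by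
  rw [(isClosed_regionUnderGraph hf).frontier_eq, interior_regionUnderGraph hf]
  ext p
  simp only [Set.mem_sdiff, mem_ofPred_eq, and_congr_right_iff]
  rintro ⟨ha, hb, hc, hfp⟩
  constructor
  · intro hint
    by_contra! hne
    exact hint ⟨ha.lt_of_ne' hne.1, hb.lt_of_ne hne.2.1, hc.lt_of_ne' hne.2.2.1,
      hfp.lt_of_ne hne.2.2.2⟩
  · rintro (h | h | h | h) ⟨_, _, _, _⟩ <;> linarith

lemma convex_regionUnderGraph (hf : ConcaveOn ℝ (Icc a b) f) :
    Convex ℝ (regionUnderGraph a b c f) := by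
  intro p ⟨hpa, hpb, hpc, hpf⟩ q ⟨hqa, hqb, hqc, hqf⟩ s t hs ht hst
  have hx : s * p 0 + t * q 0 ∈ Icc a b := convex_Icc a b ⟨hpa, hpb⟩ ⟨hqa, hqb⟩ hs ht hst
  have hy : c ≤ s * p 1 + t * q 1 := convex_Ici c hpc hqc hs ht hst
  have hfx : s * f (p 0) + t * f (q 0) ≤ f (s * p 0 + t * q 0) :=
    hf.2 ⟨hpa, hpb⟩ ⟨hqa, hqb⟩ hs ht hst
  simp only [regionUnderGraph, mem_ofPred_eq, PiLp.add_apply, PiLp.smul_apply, smul_eq_mul]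
  exact ⟨hx.1, hx.2, hy, by nlinarith⟩

lemma closure_interior_regionUnderGraph (hf : Continuous f) (hconc : ConcaveOn ℝ (Icc a b) f)
    {x : ℝ} (hax : a < x) (hxb : x < b) (hcx : c < f x) :
    closure (interior (regionUnderGraph a b c f)) = regionUnderGraph a b c f := by
  rw [(convex_regionUnderGraph hconc).closure_interior_eq_closure_of_nonempty_interior,
    (isClosed_regionUnderGraph hf).closure_eq]
  refine ⟨!₂[x, (c + f x) / 2], ?_⟩
  rw [interior_regionUnderGraph hf]
  exact ⟨hax, hxb, show c < (c + f x) / 2 by linarith, show (c + f x) / 2 < f x by linarith⟩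

lemma isCompact_regionUnderGraph (hf : Continuous f) : IsCompact (regionUnderGraph a b c f) := by
  obtain ⟨M, hM⟩ := (isCompact_Icc (a := a) (b := b)).bddAbove_image hf.continuousOn
  refine Metric.isCompact_of_isClosed_isBounded (isClosed_regionUnderGraph hf) ?_
  refine (Metric.isBounded_closedBall (x := !₂[a, c]) (r := (b - a) + (M - c))).subset ?_
  rintro p ⟨hpa, hpb, hpc, hpf⟩
  have hfM : f (p 0) ≤ M := hM ⟨p 0, ⟨hpa, hpb⟩, rfl⟩
  rw [mem_closedBall]
  refine le_of_pow_le_pow_left₀ two_ne_zero (by linarith) ?_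
  rw [dist_sq_eq]
  simp only [Matrix.cons_val_zero, Matrix.cons_val_one]
  nlinarith

end regionUnderGraph

end Plane

namespace Comb

open Plane

def tent (k x : ℝ) : ℝ := min (√3 * (x - k)) (√3 * (k + 1 - x))

def roof (x : ℝ) : ℝ := max 0 (max (tent 0 x) (max (tent 1 x) (tent 2 x)))

def region : Set Plane := regionUnderGraph (-1) 4 (-1) roof

def base : Set Plane := regionUnderGraph (-1) 4 (-1) fun _ => 0

def tooth (k : ℝ) : Set Plane := regionUnderGraph k (k + 1) 0 (tent k)

def apex (k : ℝ) : Plane := !₂[k + 1 / 2, √3 / 2]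

-- Indexed by `Fin 11`, which is `ZMod 11` by definition, so that `simp` can evaluate
-- `vertex (i + 1)` after `fin_cases i`.
def vertex : Fin 11 → Plane :=
  ![!₂[-1, -1], !₂[4, -1], !₂[4, 0], !₂[3, 0], apex 2, !₂[2, 0], apex 1, !₂[1, 0], apex 0,
    !₂[0, 0], !₂[-1, 0]]

lemma one_lt_sqrt_three : 1 < √3 := by
  rw [Real.lt_sqrt zero_le_one]; norm_num

lemma sqrt_three_sq : √3 ^ 2 = 3 := Real.sq_sqrt (by norm_num)

section tent

variable {k x : ℝ}

lemma continuous_tent (k : ℝ) : Continuous (tent k) := by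
  unfold tent; fun_prop

lemma concaveOn_tent (k : ℝ) {s : Set ℝ} (hs : Convex ℝ s) : ConcaveOn ℝ s (tent k) := by
  refine ⟨hs, fun x _ y _ a b ha hb hab => ?_⟩
  simp only [tent, smul_eq_mul, le_min_iff]
  have hx := min_le_left (√3 * (x - k)) (√3 * (k + 1 - x))
  have hy := min_le_left (√3 * (y - k)) (√3 * (k + 1 - y))
  have hx' := min_le_right (√3 * (x - k)) (√3 * (k + 1 - x))
  have hy' := min_le_right (√3 * (y - k)) (√3 * (k + 1 - y))
  constructor
  · linear_combination mul_le_mul_of_nonneg_left hx ha + mul_le_mul_of_nonneg_left hy hb -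
      √3 * k * hab
  · linear_combination mul_le_mul_of_nonneg_left hx' ha + mul_le_mul_of_nonneg_left hy' hb +
      √3 * (k + 1) * hab

lemma tent_nonneg (h₁ : k ≤ x) (h₂ : x ≤ k + 1) : 0 ≤ tent k x :=
  le_min (by nlinarith [Real.sqrt_nonneg 3]) (by nlinarith [Real.sqrt_nonneg 3])

lemma tent_mid (k : ℝ) : tent k (k + 1 / 2) = √3 / 2 := by
  rw [tent, min_eq_left (by ring_nf; rfl)]; ring

lemma tent_nonpos (h : x ≤ k ∨ k + 1 ≤ x) : tent k x ≤ 0 := by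
  have := Real.sqrt_nonneg 3
  rcases h with h | h
  · exact (min_le_left _ _).trans (by nlinarith)
  · exact (min_le_right _ _).trans (by nlinarith)

lemma mem_Icc_of_nonneg_of_le_tent {y : ℝ} (h₀ : 0 ≤ y) (h : y ≤ tent k x) : x ∈ Icc k (k + 1) := by
  have := one_lt_sqrt_three
  have := le_min_iff.1 (h₀.trans h)
  constructor <;> nlinarith

lemma mem_tooth_iff {p : Plane} : p ∈ tooth k ↔ 0 ≤ p 1 ∧ p 1 ≤ tent k (p 0) := by
  refine ⟨fun h => ⟨h.2.2.1, h.2.2.2⟩, fun ⟨h₀, h⟩ => ?_⟩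
  obtain ⟨hk, hk'⟩ := mem_Icc_of_nonneg_of_le_tent h₀ h
  exact ⟨hk, hk', h₀, h⟩

end tent

section roof

variable {k x : ℝ}

lemma continuous_roof : Continuous roof := by
  have := continuous_tent; unfold roof; fun_prop

lemma roof_nonneg (x : ℝ) : 0 ≤ roof x := le_max_left _ _

lemma tent_le_roof (hk : k = 0 ∨ k = 1 ∨ k = 2) (x : ℝ) : tent k x ≤ roof x := by
  rcases hk with rfl | rfl | rfl <;> simp [roof]

lemma roof_eq_tent (hk : k = 0 ∨ k = 1 ∨ k = 2) (h₁ : k ≤ x) (h₂ : x ≤ k + 1) :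
    roof x = tent k x := by
  refine le_antisymm ?_ (tent_le_roof hk x)
  have h₀ := tent_nonneg h₁ h₂
  have other : ∀ j : ℝ, (j + 1 ≤ k ∨ k + 1 ≤ j) → tent j x ≤ tent k x := fun j hj =>
    (tent_nonpos (hj.symm.imp (fun h => by linarith) (fun h => by linarith))).trans h₀
  rcases hk with rfl | rfl | rfl <;> refine max_le h₀ (max_le ?_ (max_le ?_ ?_)) <;>
    first | exact le_rfl | exact other _ (by norm_num)

lemma roof_eq_zero (h : x ≤ 0 ∨ 3 ≤ x) : roof x = 0 := by
  refine le_antisymm (max_le le_rfl (max_le ?_ (max_le ?_ ?_))) (roof_nonneg x) <;>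
    exact tent_nonpos (by rcases h with h | h <;> [left; right] <;> linarith)

end roof

section region

variable {k : ℝ}

lemma base_subset_region : base ⊆ region := fun _ ⟨h₁, h₂, h₃, h₄⟩ =>
  ⟨h₁, h₂, h₃, h₄.trans (roof_nonneg _)⟩

lemma tooth_subset_region (hk : k = 0 ∨ k = 1 ∨ k = 2) : tooth k ⊆ region :=
  fun p ⟨h₁, h₂, h₃, h₄⟩ => ⟨by rcases hk with rfl | rfl | rfl <;> linarith,
    by rcases hk with rfl | rfl | rfl <;> linarith, by linarith, h₄.trans (tent_le_roof hk _)⟩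

lemma region_eq_union : region = base ∪ (tooth 0 ∪ tooth 1 ∪ tooth 2) := by
  refine Subset.antisymm (fun p ⟨h₁, h₂, h₃, h₄⟩ => ?_) <| union_subset base_subset_region <|
    union_subset (union_subset (tooth_subset_region (by norm_num))
      (tooth_subset_region (by norm_num))) (tooth_subset_region (by norm_num))
  rcases le_or_gt (p 1) 0 with hy | hy
  · exact Or.inl ⟨h₁, h₂, h₃, hy⟩
  simp only [roof, le_max_iff, not_le.2 hy, false_or] at h₄
  right
  rcases h₄ with h | h | h
  · exact Or.inl (Or.inl (mem_tooth_iff.2 ⟨hy.le, h⟩))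
  · exact Or.inl (Or.inr (mem_tooth_iff.2 ⟨hy.le, h⟩))
  · exact Or.inr (mem_tooth_iff.2 ⟨hy.le, h⟩)

lemma isCompact_region : IsCompact region := isCompact_regionUnderGraph continuous_roof

lemma convex_base : Convex ℝ base := convex_regionUnderGraph (concaveOn_const 0 (convex_Icc _ _))

lemma convex_tooth (k : ℝ) : Convex ℝ (tooth k) :=
  convex_regionUnderGraph (concaveOn_tent k (convex_Icc _ _))

lemma mouth_mem_base_inter_tooth (hk : k = 0 ∨ k = 1 ∨ k = 2) :
    !₂[k + 1 / 2, 0] ∈ base ∩ tooth k := by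
  have := tent_mid k
  have := Real.sqrt_nonneg 3
  rw [mem_inter_iff, base, tooth, mk_mem_regionUnderGraph, mk_mem_regionUnderGraph]
  rcases hk with rfl | rfl | rfl <;> norm_num <;> linarith

lemma isConnected_region : IsConnected region := by
  have piece : ∀ {s : Set Plane}, Convex ℝ s → s.Nonempty → IsConnected s :=
    fun hs hne => (hs.isPathConnected hne).isConnected
  have hbase : IsConnected base :=
    piece convex_base ⟨_, (mouth_mem_base_inter_tooth (k := 0) (by norm_num)).1⟩
  have glue : ∀ {s : Set Plane}, IsConnected s → base ⊆ s → ∀ k : ℝ, (k = 0 ∨ k = 1 ∨ k = 2) →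
      IsConnected (s ∪ tooth k) := fun hs hsub k hk =>
    have hmouth := mouth_mem_base_inter_tooth hk
    IsConnected.union ⟨_, hsub hmouth.1, hmouth.2⟩ hs (piece (convex_tooth k) ⟨_, hmouth.2⟩)
  rw [region_eq_union, ← union_assoc, ← union_assoc]
  exact glue (glue (glue hbase le_rfl 0 (by norm_num)) subset_union_left 1 (by norm_num))
    (subset_union_left.trans subset_union_left) 2 (by norm_num)

lemma closure_interior_region : closure (interior region) = region := by
  refine Subset.antisymm (closure_minimal interior_subset
    (isClosed_regionUnderGraph continuous_roof)) ?_
  have piece : ∀ s ⊆ region, closure (interior s) = s → s ⊆ closure (interior region) :=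
    fun s hs h => h ▸ closure_mono (interior_mono hs)
  have htooth : ∀ k : ℝ, (k = 0 ∨ k = 1 ∨ k = 2) → tooth k ⊆ closure (interior region) :=
    fun k hk => piece _ (tooth_subset_region hk) <| closure_interior_regionUnderGraph
      (continuous_tent k) (concaveOn_tent k (convex_Icc _ _)) (x := k + 1 / 2) (by linarith)
      (by linarith) (by rw [tent_mid]; positivity)
  refine region_eq_union.subset.trans <| union_subset (piece _ base_subset_region ?_)
    (union_subset (union_subset (htooth 0 (by norm_num)) (htooth 1 (by norm_num)))
      (htooth 2 (by norm_num)))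
  exact closure_interior_regionUnderGraph continuous_const (concaveOn_const 0 (convex_Icc _ _))
    (x := 0) (by norm_num) (by norm_num) (by norm_num)

end region

def sides (k : ℝ) : Set Plane := segment ℝ !₂[k + 1, 0] (apex k) ∪ segment ℝ (apex k) !₂[k, 0]

lemma mem_sides_iff {k : ℝ} {p : Plane} :
    p ∈ sides k ↔ k ≤ p 0 ∧ p 0 ≤ k + 1 ∧ p 1 = tent k (p 0) := by
  have := Real.sqrt_nonneg 3
  simp only [sides, apex, mem_union, mem_segment_iff, mem_Icc]
  constructor
  · rintro (⟨t, ⟨ht₀, ht₁⟩, hx, hy⟩ | ⟨t, ⟨ht₀, ht₁⟩, hx, hy⟩)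
    · refine ⟨by linarith, by linarith, ?_⟩
      rw [tent, min_eq_right (by rw [hx]; nlinarith), hy, hx]; ring
    · refine ⟨by linarith, by linarith, ?_⟩
      rw [tent, min_eq_left (by rw [hx]; nlinarith), hy, hx]; ring
  · rintro ⟨h₁, h₂, hy⟩
    rcases le_total (k + 1 / 2) (p 0) with h | h
    · rw [tent, min_eq_right (by nlinarith)] at hy
      exact Or.inl ⟨2 * (k + 1 - p 0), ⟨by linarith, by linarith⟩, by ring, by rw [hy]; ring⟩
    · rw [tent, min_eq_left (by nlinarith)] at hy
      exact Or.inr ⟨2 * (k + 1 / 2 - p 0), ⟨by linarith, by linarith⟩, by ring, by rw [hy]; ring⟩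

lemma mem_region_of_mem_sides {k : ℝ} (hk : k = 0 ∨ k = 1 ∨ k = 2) {p : Plane}
    (h : p ∈ sides k) : p ∈ region ∧ p 1 = roof (p 0) := by
  obtain ⟨hk₁, hk₂, hy⟩ := mem_sides_iff.1 h
  have := tent_nonneg hk₁ hk₂
  have := tent_le_roof hk (p 0)
  refine ⟨⟨?_, ?_, ?_, ?_⟩, hy.trans (roof_eq_tent hk hk₁ hk₂).symm⟩ <;>
    rcases hk with rfl | rfl | rfl <;> linarith

lemma exists_mem_edge {p : Plane} (hp : p ∈ region)
    (h : p 0 = -1 ∨ p 0 = 4 ∨ p 1 = -1 ∨ p 1 = roof (p 0)) :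
    ∃ i, p ∈ segment ℝ (vertex i) (vertex (i + 1)) := by
  obtain ⟨h₁, h₂, h₃, h₄⟩ := hp
  rcases h with hx | hx | hy | hy
  · have : p 1 ≤ 0 := h₄.trans_eq (roof_eq_zero (Or.inl (by linarith)))
    exact ⟨10, mem_segment_iff.2 ⟨-p 1, ⟨by linarith, by linarith⟩, by simp [hx], by ring⟩⟩
  · have : p 1 ≤ 0 := h₄.trans_eq (roof_eq_zero (Or.inr (by linarith)))
    exact ⟨1, mem_segment_iff.2 ⟨p 1 + 1, ⟨by linarith, by linarith⟩, by simp [hx], by ring⟩⟩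
  · exact ⟨0, mem_segment_iff.2 ⟨(p 0 + 1) / 5, ⟨by linarith, by linarith⟩, by ring,
      by simp [hy]⟩⟩
  rcases le_or_gt (p 0) 0 with hx₀ | hx₀
  · rw [roof_eq_zero (Or.inl hx₀)] at hy
    exact ⟨9, mem_segment_iff.2 ⟨-p 0, ⟨by linarith, by linarith⟩, by ring, by simp [hy]⟩⟩
  rcases le_or_gt 3 (p 0) with hx₃ | hx₃
  · rw [roof_eq_zero (Or.inr hx₃)] at hy
    exact ⟨2, mem_segment_iff.2 ⟨4 - p 0, ⟨by linarith, by linarith⟩, by ring, by simp [hy]⟩⟩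
  have side : ∀ k : ℝ, (k = 0 ∨ k = 1 ∨ k = 2) → k ≤ p 0 → p 0 ≤ k + 1 → p ∈ sides k :=
    fun k hk hk₁ hk₂ => mem_sides_iff.2 ⟨hk₁, hk₂, hy.trans (roof_eq_tent hk hk₁ hk₂)⟩
  rcases le_total (p 0) 1 with hx₁ | hx₁
  · rcases side 0 (by norm_num) hx₀.le (by linarith) with h | h
    exacts [⟨7, by norm_num at h; exact h⟩, ⟨8, h⟩]
  rcases le_total (p 0) 2 with hx₂ | hx₂
  · rcases side 1 (by norm_num) hx₁ (by linarith) with h | h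
    exacts [⟨5, by norm_num at h; exact h⟩, ⟨6, h⟩]
  · rcases side 2 (by norm_num) hx₂ (by linarith) with h | h
    exacts [⟨3, by norm_num at h; exact h⟩, ⟨4, h⟩]

lemma mem_region_of_mem_edge {p : Plane} {i : Fin 11}
    (hi : p ∈ segment ℝ (vertex i) (vertex (i + 1))) :
    p ∈ region ∧ (p 0 = -1 ∨ p 0 = 4 ∨ p 1 = -1 ∨ p 1 = roof (p 0)) := by
  have := roof_nonneg (p 0)
  have top : ∀ k : ℝ, (k = 0 ∨ k = 1 ∨ k = 2) → p ∈ sides k →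
      p ∈ region ∧ (p 0 = -1 ∨ p 0 = 4 ∨ p 1 = -1 ∨ p 1 = roof (p 0)) := fun k hk h =>
    (mem_region_of_mem_sides hk h).imp_right fun h => Or.inr (Or.inr (Or.inr h))
  have shelf : p 1 = 0 → (p 0 ≤ 0 ∨ 3 ≤ p 0) → -1 ≤ p 0 → p 0 ≤ 4 →
      p ∈ region ∧ (p 0 = -1 ∨ p 0 = 4 ∨ p 1 = -1 ∨ p 1 = roof (p 0)) := fun hy hx h₁ h₂ =>
    ⟨⟨h₁, h₂, by linarith, by simp [hy, roof_eq_zero hx]⟩,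
      Or.inr (Or.inr (Or.inr (by simp [hy, roof_eq_zero hx])))⟩
  fin_cases i
  · obtain ⟨t, ⟨ht₀, ht₁⟩, hx, hy⟩ := mem_segment_iff.1 hi
    norm_num at hx hy
    exact ⟨⟨by linarith, by linarith, by linarith, by linarith⟩, by tauto⟩
  · obtain ⟨t, ⟨ht₀, ht₁⟩, hx, hy⟩ := mem_segment_iff.1 hi
    norm_num at hx hy
    exact ⟨⟨by linarith, by linarith, by linarith, by linarith⟩, by tauto⟩
  · obtain ⟨t, ⟨ht₀, ht₁⟩, hx, hy⟩ := mem_segment_iff.1 hi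
    norm_num at hx hy
    exact shelf hy (Or.inr (by linarith)) (by linarith) (by linarith)
  · exact top 2 (by norm_num) (by norm_num [sides]; exact Or.inl hi)
  · exact top 2 (by norm_num) (Or.inr hi)
  · exact top 1 (by norm_num) (by norm_num [sides]; exact Or.inl hi)
  · exact top 1 (by norm_num) (Or.inr hi)
  · exact top 0 (by norm_num) (by norm_num [sides]; exact Or.inl hi)
  · exact top 0 (by norm_num) (Or.inr hi)
  · obtain ⟨t, ⟨ht₀, ht₁⟩, hx, hy⟩ := mem_segment_iff.1 hi
    norm_num at hx hy
    exact shelf hy (Or.inl (by linarith)) (by linarith) (by linarith)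
  · obtain ⟨t, ⟨ht₀, ht₁⟩, hx, hy⟩ := mem_segment_iff.1 hi
    norm_num at hx hy
    exact ⟨⟨by linarith, by linarith, by linarith, by linarith⟩, by tauto⟩

lemma frontier_region : frontier region = ⋃ i, segment ℝ (vertex i) (vertex (i + 1)) := by
  rw [region, frontier_regionUnderGraph continuous_roof, ← region]
  ext p
  simp only [mem_ofPred_eq, mem_iUnion]
  exact ⟨fun ⟨hp, h⟩ => exists_mem_edge hp h, fun ⟨_, hi⟩ => mem_region_of_mem_edge hi⟩

lemma one_le_dist_vertex {i j : Fin 11} (hij : i ≠ j) : 1 ≤ dist (vertex i) (vertex j) := by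
  refine le_of_pow_le_pow_left₀ two_ne_zero dist_nonneg ?_
  rw [one_pow, dist_sq_eq]
  have := sqrt_three_sq
  have := one_lt_sqrt_three
  fin_cases i <;> fin_cases j <;> first
    | exact absurd rfl hij
    | (simp [vertex, apex] <;> first | nlinarith | norm_num)

lemma vertex_injective : Function.Injective vertex := fun i j h => by
  by_contra hij
  exact absurd (one_le_dist_vertex hij) (by simp [h])

lemma edges_adjacent (i : Fin 11) :
    segment ℝ (vertex i) (vertex (i + 1)) ∩ segment ℝ (vertex (i + 1)) (vertex (i + 2)) =
      {vertex (i + 1)} := by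
  have := one_lt_sqrt_three
  apply segment_inter_segment_eq_singleton
  fin_cases i <;> simp [vertex, apex] <;> nlinarith

lemma edges_disjoint (i j : Fin 11) (h₁ : i ≠ j) (h₂ : i + 1 ≠ j) (h₃ : j + 1 ≠ i) :
    Disjoint (segment ℝ (vertex i) (vertex (i + 1))) (segment ℝ (vertex j) (vertex (j + 1))) := by
  have := one_lt_sqrt_three
  fin_cases i <;> fin_cases j <;> first
    | (exfalso; revert h₁ h₂ h₃; decide)
    | (apply disjoint_segment_of_lt 0 <;> simp [vertex, apex] <;> linarith)
    | (apply disjoint_segment_of_lt 1 <;> simp [vertex, apex] <;> linarith)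
    | (apply Disjoint.symm; apply disjoint_segment_of_lt 0 <;> simp [vertex, apex] <;> linarith)
    | (apply Disjoint.symm; apply disjoint_segment_of_lt 1 <;> simp [vertex, apex] <;> linarith)

lemma apex_mem_tooth (k : ℝ) : apex k ∈ tooth k := by
  refine mem_tooth_iff.2 ⟨show 0 ≤ √3 / 2 by positivity, (tent_mid k).ge⟩

/-- Near the apex, the segment from `p` to `apex k` runs over the mouth of tooth `k`, where the
region is bounded by `tent k`; but if `p` lies above `tent k`, it lies strictly above one of the
two lines through the sides of the tooth, and then so does every point of the segment but the
apex. -/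
lemma le_tent_of_sees_apex {k : ℝ} (hk : k = 0 ∨ k = 1 ∨ k = 2) {p : Plane}
    (h : Sees region p (apex k)) : p 1 ≤ tent k (p 0) := by
  by_contra! hlt
  set z : ℝ → Plane := fun s => lineMap (apex k) p s
  have hz₀ : ∀ s, z s 0 = k + 1 / 2 + s * (p 0 - (k + 1 / 2)) :=
    fun s => lineMap_apply_coord _ _ s 0
  have hz₁ : ∀ s, z s 1 = √3 / 2 + s * (p 1 - √3 / 2) := fun s => lineMap_apply_coord _ _ s 1
  have hU : IsOpen {q : Plane | 0 < q 1 ∧ k < q 0 ∧ q 0 < k + 1} := by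
    simp only [ofPred_and]
    exact (isOpen_lt continuous_const (by fun_prop)).inter <|
      (isOpen_lt continuous_const (by fun_prop)).inter (isOpen_lt (by fun_prop) continuous_const)
  have hnear : ∀ᶠ s in 𝓝[>] (0:ℝ), 0 < s ∧ s < 1 ∧ 0 < z s 1 ∧ k < z s 0 ∧ z s 0 < k + 1 := by
    have hcont : Tendsto z (𝓝 0) (𝓝 (apex k)) :=
      (Continuous.tendsto' (by fun_prop) 0 (apex k) (by simp [z]))
    have hapex : apex k ∈ {q : Plane | 0 < q 1 ∧ k < q 0 ∧ q 0 < k + 1} :=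
      ⟨show 0 < √3 / 2 by positivity, show k < k + 1 / 2 by linarith,
        show k + 1 / 2 < k + 1 by linarith⟩
    filter_upwards [self_mem_nhdsWithin, nhdsWithin_le_nhds (eventually_lt_nhds one_pos),
      nhdsWithin_le_nhds (hcont.eventually (hU.mem_nhds hapex))] with s hs₀ hs₁ hs
    exact ⟨hs₀, hs₁, hs⟩
  obtain ⟨s, hs₀, hs₁, hy, hx₁, hx₂⟩ := hnear.exists
  have hmem : z s ∈ region :=
    h (segment_symm ℝ p (apex k) ▸ lineMap_mem_segment ℝ (apex k) p ⟨hs₀.le, hs₁.le⟩)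
  have hle : z s 1 ≤ tent k (z s 0) := hmem.2.2.2.trans_eq (roof_eq_tent hk hx₁.le hx₂.le)
  rw [tent, le_min_iff, hz₀, hz₁] at hle
  rw [tent, min_lt_iff] at hlt
  rcases hlt with hlt | hlt
  · nlinarith [mul_pos hs₀ (sub_pos.2 hlt)]
  · nlinarith [mul_pos hs₀ (sub_pos.2 hlt)]

lemma vertex_mem_tooth_of_sees_apex {k : ℝ} (hk : k = 0 ∨ k = 1 ∨ k = 2) {i : Fin 11}
    (h : Sees region (vertex i) (apex k)) : vertex i ∈ tooth k := by
  have hle := le_tent_of_sees_apex hk h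
  refine mem_tooth_iff.2 ⟨?_, hle⟩
  have := one_lt_sqrt_three
  have hk₀ : 0 ≤ k := by rcases hk with rfl | rfl | rfl <;> norm_num
  have hk₂ : k ≤ 2 := by rcases hk with rfl | rfl | rfl <;> norm_num
  -- the only vertices below the mouth line are the two bottom corners, far outside the wedge
  fin_cases i <;> simp [vertex, apex, tent] at hle ⊢ <;> nlinarith

lemma dist_le_one_of_mem_tooth {k : ℝ} {p : Plane} (hp : p ∈ tooth k) :
    dist p !₂[k, 0] ≤ 1 ∧ dist p !₂[k + 1, 0] ≤ 1 := by
  obtain ⟨h₁, h₂, h₃, h₄⟩ := hp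
  obtain ⟨hl, hr⟩ := le_min_iff.1 h₄
  have h3 := Real.mul_self_sqrt (show (0:ℝ) ≤ 3 by norm_num)
  have hl' := mul_self_le_mul_self h₃ hl
  have hr' := mul_self_le_mul_self h₃ hr
  have sq : ∀ x : ℝ, dist p !₂[x, 0] ≤ 1 ↔ (p 0 - x) ^ 2 + p 1 ^ 2 ≤ 1 := fun x => by
    rw [← sq_le_one_iff₀ dist_nonneg, dist_sq_eq]; simp
  rw [sq, sq]
  constructor <;> rcases le_total (p 0) (k + 1 / 2) with h | h <;> nlinarith

lemma geodesicDist_le_two {k : ℝ} (hk : k = 0 ∨ k = 1) {p q : Plane} (hp : p ∈ tooth k)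
    (hq : q ∈ tooth (k + 1)) : geodesicDist region p q ≤ 2 := by
  have hk' : k = 0 ∨ k = 1 ∨ k = 2 := by tauto
  have hk'' : k + 1 = 0 ∨ k + 1 = 1 ∨ k + 1 = 2 := by rcases hk with rfl | rfl <;> norm_num
  have hc : !₂[k + 1, 0] ∈ tooth k ∩ tooth (k + 1) :=
    ⟨mem_tooth_iff.2 ⟨by simp, by simp [tent]⟩, mem_tooth_iff.2 ⟨by simp, by simp [tent]⟩⟩
  calc geodesicDist region p q ≤ edist p !₂[k + 1, 0] + edist !₂[k + 1, 0] q :=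
        geodesicDist_le_edist_add_edist
          (((convex_tooth k).segment_subset hp hc.1).trans (tooth_subset_region hk'))
          (((convex_tooth (k + 1)).segment_subset hc.2 hq).trans (tooth_subset_region hk''))
    _ ≤ 1 + 1 := by
        rw [edist_dist, edist_dist, ← ENNReal.ofReal_one]
        gcongr
        · exact (dist_le_one_of_mem_tooth hp).2
        · exact dist_comm q _ ▸ (dist_le_one_of_mem_tooth hq).1
    _ = 2 := one_add_one_eq_two

lemma disjoint_tooth_zero_two : Disjoint (tooth 0) (tooth 2) :=
  Set.disjoint_left.2 fun p h₀ h₂ => by linarith [h₀.2.1, h₂.1]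

def polygon : SimplePolygon where
  n := 11
  three_le := by norm_num
  vertex := vertex
  carrier := region
  isCompact := isCompact_region
  isConnected := isConnected_region
  regular := closure_interior_region.symm
  frontier_eq := frontier_region
  vertex_injective := vertex_injective
  edges_adjacent := edges_adjacent
  edges_disjoint := edges_disjoint

end Comb

/-- There is a simple polygon with pairwise geodesic vertex
distance at least `1` such that every vertex guard set contains two distinct
guards at geodesic distance at most `2`. -/
theorem exists_polygon_dispersion_le_two :
    ∃ P : SimplePolygon,
      (∀ i j : ZMod P.n, i ≠ j →
        1 ≤ geodesicDist P.carrier (P.vertex i) (P.vertex j)) ∧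
      ∀ G : Set Plane, P.IsVertexGuardSet G →
        ∃ g ∈ G, ∃ h ∈ G, g ≠ h ∧ geodesicDist P.carrier g h ≤ 2 := by
  refine ⟨Comb.polygon, fun i j hij => ?_, fun G ⟨hGv, _, hGcov⟩ => ?_⟩
  · calc 1 ≤ edist (Comb.vertex i) (Comb.vertex j) := by
          rw [edist_dist]; exact ENNReal.one_le_ofReal.2 (Comb.one_le_dist_vertex hij)
      _ ≤ _ := edist_le_geodesicDist _ _ _
  have guard : ∀ k : ℝ, (k = 0 ∨ k = 1 ∨ k = 2) → ∃ g ∈ G, g ∈ Comb.tooth k := fun k hk => by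
    obtain ⟨g, hgG, hg⟩ := hGcov _ (Comb.tooth_subset_region hk (Comb.apex_mem_tooth k))
    obtain ⟨i, rfl⟩ := hGv hgG
    exact ⟨_, hgG, Comb.vertex_mem_tooth_of_sees_apex hk hg⟩
  obtain ⟨g₀, hg₀, h₀⟩ := guard 0 (by norm_num)
  obtain ⟨g₁, hg₁, h₁⟩ := guard 1 (by norm_num)
  obtain ⟨g₂, hg₂, h₂⟩ := guard 2 (by norm_num)
  by_cases h : g₀ = g₁
  · subst h
    exact ⟨g₀, hg₀, g₂, hg₂, Comb.disjoint_tooth_zero_two.ne_of_mem h₀ h₂,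
      Comb.geodesicDist_le_two (k := 1) (by norm_num) h₁ (by norm_num; exact h₂)⟩
  · exact ⟨g₀, hg₀, g₁, hg₁, h,
      Comb.geodesicDist_le_two (k := 0) (by norm_num) h₀ (by simpa using h₁)⟩
end
end

section
/- Let x5 be a real number with 1 ≤ x5 ≤ 2, let v1 = (0,0) and v5 = (x5, 0) in the Euclidean plane, and let R = [0, x5] × [0, √3/2] be the closed axis-aligned rectangle of height √3/2 above the segment [v1, v5]. If v7 ∈ R satisfies ‖v7 − v1‖ ≥ 1 and ‖v7 − v5‖ ≥ 1, then R is completely covered by the three closed unit disks centered at v1, v5, and v7; that is, R ⊆ closedBall(v1, 1) ∪ closedBall(v5, 1) ∪ closedBall(v7, 1). -/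
open Set Metric
open scoped ENNReal

noncomputable section

lemma core_poly (u v : ℝ) (hu1 : 1/2 ≤ u) (hv1 : 1/2 ≤ v)
    (h : u + v ≤ 3/2) :
    (u-v)^2*(u+v)^2 ≤ (1-(2-u-v)^2)*(2-u^2-v^2) := by
  nlinarith [sq_nonneg (u-v), mul_nonneg (sub_nonneg.2 hu1) (sub_nonneg.2 hv1),
    sq_nonneg (u+v-3/2), sq_nonneg (u+v-1),
    mul_nonneg (mul_nonneg (sub_nonneg.2 hu1) (sub_nonneg.2 hv1)) (sub_nonneg.2 h)]

lemma coreG (u v b y : ℝ) (hu : u^2 + y^2 = 1) (hv : v^2 + b^2 = 1)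
    (hu1 : 1/2 ≤ u) (hv1 : 1/2 ≤ v)
    (hb : 0 ≤ b) (hy : 0 ≤ y) :
    (b-y)^2 + (2-u-v)^2 ≤ 1 := by
  rcases le_or_gt (3/2) (u+v) with h | h
  · nlinarith [mul_nonneg hb hy, sq_nonneg (u+v-2)]
  · have hpos : (0:ℝ) < 2 - u^2 - v^2 := by nlinarith
    have h1 : (b-y)^2 * (2-u^2-v^2) ≤ (u-v)^2*(u+v)^2 := by
      have hby : (b-y)^2*(b+y)^2 = (u-v)^2*(u+v)^2 := by nlinarith [sq_nonneg (b-y)]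
      have h3 : (2-u^2-v^2) ≤ (b+y)^2 := by nlinarith [mul_nonneg hb hy]
      calc (b-y)^2 * (2-u^2-v^2) ≤ (b-y)^2 * (b+y)^2 :=
            mul_le_mul_of_nonneg_left h3 (sq_nonneg _)
        _ = (u-v)^2*(u+v)^2 := hby
    have h2 := core_poly u v hu1 hv1 h.le
    have h4 : (b-y)^2 * (2-u^2-v^2) ≤ (1-(2-u-v)^2) * (2-u^2-v^2) := h1.trans h2
    have h5 : (b-y)^2 ≤ 1-(2-u-v)^2 := le_of_mul_le_mul_right h4 hpos
    linarith

lemma half_le_sqrt {t : ℝ} (ht : 1/4 ≤ t) : 1/2 ≤ Real.sqrt t := by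
  have h := Real.sqrt_le_sqrt ht
  rwa [show (1:ℝ)/4 = (1/2)^2 by norm_num, Real.sqrt_sq (by norm_num)] at h

lemma sqrt_le_one' {t : ℝ} (ht : t ≤ 1) : Real.sqrt t ≤ 1 := by
  have h := Real.sqrt_le_sqrt ht
  rwa [Real.sqrt_one] at h

lemma key (x5 a b x y : ℝ) (hx5' : x5 ≤ 2) (ha2 : a ≤ x5)
    (hb : 0 ≤ b) (hb2 : b^2 ≤ 3/4)
    (h75 : 1 ≤ (a - x5)^2 + b^2)
    (hx : 0 ≤ x) (hx2 : x ≤ a) (hy : 0 ≤ y) (hy2 : y^2 ≤ 3/4) :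
    x^2 + y^2 ≤ 1 ∨ (x-a)^2 + (y-b)^2 ≤ 1 := by
  by_contra hc
  push_neg at hc
  obtain ⟨h1, h2⟩ := hc
  set u := Real.sqrt (1 - y^2) with hu_def
  set v := Real.sqrt (1 - b^2) with hv_def
  have hy2' : (0:ℝ) ≤ 1 - y^2 := by linarith
  have hb2' : (0:ℝ) ≤ 1 - b^2 := by linarith
  have hu_sq : u^2 = 1 - y^2 := Real.sq_sqrt hy2'
  have hv_sq : v^2 = 1 - b^2 := Real.sq_sqrt hb2'
  have hu0 : 0 ≤ u := Real.sqrt_nonneg _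
  have hv0 : 0 ≤ v := Real.sqrt_nonneg _
  have hu1 : 1/2 ≤ u := half_le_sqrt (by linarith)
  have hv1 : 1/2 ≤ v := half_le_sqrt (by linarith)
  have hu2 : u ≤ 1 := sqrt_le_one' (by nlinarith [sq_nonneg y])
  have hv2 : v ≤ 1 := sqrt_le_one' (by nlinarith [sq_nonneg b])
  have hxu : u < x := by
    have h' : u^2 < x^2 := by rw [hu_sq]; linarith
    exact lt_of_pow_lt_pow_left₀ 2 hx h'
  have hva : v ≤ x5 - a := by
    have h' : Real.sqrt (1 - b^2) ≤ Real.sqrt ((x5 - a)^2) :=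
      Real.sqrt_le_sqrt (by nlinarith)
    rwa [Real.sqrt_sq (by linarith)] at h'
  have hax : a - x ≤ 2 - u - v := by linarith
  have hax0 : 0 ≤ a - x := by linarith
  have hsq : (a-x)^2 ≤ (2-u-v)^2 := pow_le_pow_left₀ hax0 hax 2
  have hcore := coreG u v b y (by linarith) (by linarith) hu1 hv1 hb hy
  have e1 : (x-a)^2 = (a-x)^2 := by ring
  have e2 : (y-b)^2 = (b-y)^2 := by ring
  rw [e1, e2] at h2
  linarith

lemma in_ball (p q : Plane) (h : (p 0 - q 0)^2 + (p 1 - q 1)^2 ≤ 1) :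
    p ∈ closedBall q 1 := by
  rw [mem_closedBall, EuclideanSpace.dist_eq, Fin.sum_univ_two,
    Real.dist_eq, Real.dist_eq, sq_abs, sq_abs]
  calc Real.sqrt _ ≤ Real.sqrt 1 := Real.sqrt_le_sqrt h
    _ = 1 := Real.sqrt_one

lemma norm_sq_ge (w : Plane) (h : 1 ≤ ‖w‖) : 1 ≤ (w 0)^2 + (w 1)^2 := by
  have h2 : ‖w‖^2 = (w 0)^2 + (w 1)^2 := by
    rw [EuclideanSpace.norm_eq, Real.sq_sqrt (by positivity), Fin.sum_univ_two,
      Real.norm_eq_abs, Real.norm_eq_abs, sq_abs, sq_abs]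
  nlinarith


/-- Let `v₁ = (0,0)`, `v₅ = (x₅,0)` with `1 ≤ x₅ ≤ 2`, and
let `R = [0,x₅] × [0, √3/2]`.  If `v₇ ∈ R` has distance at least `1` from both
`v₁` and `v₅`, then `R` is covered by the three closed unit disks centered at
`v₁`, `v₅`, and `v₇`. -/
theorem rectangle_covered_by_three_unit_disks (x5 : ℝ)
    (hx5 : 1 ≤ x5) (hx5' : x5 ≤ 2) (v1 v5 v7 : Plane)
    (hv1x : v1 0 = 0) (hv1y : v1 1 = 0)
    (hv5x : v5 0 = x5) (hv5y : v5 1 = 0)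
    (hv7 : v7 0 ∈ Icc 0 x5 ∧ v7 1 ∈ Icc 0 (Real.sqrt 3 / 2))
    (h71 : 1 ≤ ‖v7 - v1‖) (h75 : 1 ≤ ‖v7 - v5‖) :
    {p : Plane | p 0 ∈ Icc 0 x5 ∧ p 1 ∈ Icc 0 (Real.sqrt 3 / 2)} ⊆
      closedBall v1 1 ∪ closedBall v5 1 ∪ closedBall v7 1 := by
  obtain ⟨⟨ha0, ha2⟩, ⟨hb0, hb2⟩⟩ := hv7
  set a := v7 0
  set b := v7 1
  have hsqrt3 : Real.sqrt 3 ^ 2 = 3 := Real.sq_sqrt (by norm_num)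
  have hb2sq : b^2 ≤ 3/4 := by nlinarith
  have h71' : 1 ≤ a^2 + b^2 := by
    have h := norm_sq_ge (v7 - v1) h71
    simpa [PiLp.sub_apply, hv1x, hv1y] using h
  have h75' : 1 ≤ (a - x5)^2 + b^2 := by
    have h := norm_sq_ge (v7 - v5) h75
    simpa [PiLp.sub_apply, hv5x, hv5y] using h
  intro p hp
  obtain ⟨⟨hx0, hx2⟩, ⟨hy0, hy2⟩⟩ := hp
  set x := p 0
  set y := p 1
  have hy2sq : y^2 ≤ 3/4 := by nlinarith
  rcases le_total x a with hxa | hxa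
  · rcases key x5 a b x y hx5' ha2 hb0 hb2sq h75' hx0 hxa hy0 hy2sq with h | h
    · refine Or.inl (Or.inl (in_ball p v1 ?_))
      rw [hv1x, hv1y, sub_zero, sub_zero]; exact h
    · exact Or.inr (in_ball p v7 h)
  · have h71'' : 1 ≤ (x5 - a - x5)^2 + b^2 := by nlinarith [h71']
    rcases key x5 (x5 - a) b (x5 - x) y hx5' (by linarith) hb0 hb2sq h71''
        (by linarith) (by linarith) hy0 hy2sq with h | h
    · refine Or.inl (Or.inr (in_ball p v5 ?_))
      rw [hv5x, hv5y, sub_zero]; nlinarith [h]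
    · refine Or.inr (in_ball p v7 ?_)
      nlinarith [h]
end
end

section
/- Let Q be a simple quadrilateral in the Euclidean plane with vertices a, b, c, d appearing in this cyclic order along its boundary, and suppose the interior angle of Q at the vertex b is strictly greater than 180° (b is reflex). Then b lies in the convex hull of the three remaining vertices {a, c, d}. -/
open Set Metric
open scoped ENNReal

noncomputable section

/-!
If `b` is not in the convex hull of `a, c, d`, a separating linear functional `f` is maximised
among the vertices strictly and only at `b`. Since `b` lies in the closure of the interior, where
`f < f b`, every level `s` slightly below `f b` is attained at an interior point. The boundary meets
the line `{f = s}` only at the two points `a', c'` where it crosses the edges at `b`, and in the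
plane that line is the line `a'c'`; hence the segment `[a', c']` lies in `Q`, arbitrarily close
to `b`, so `b` is not reflex.
-/

open Filter Topology AffineMap

theorem IsPreconnected.subset_of_disjoint_frontier {X : Type*} [TopologicalSpace X]
    {s t : Set X} (hs : IsPreconnected s) (hst : (s ∩ t).Nonempty)
    (hfr : Disjoint s (frontier t)) : s ⊆ t := by
  have hcover : s ⊆ interior t ∪ (closure t)ᶜ := fun x hx => by
    by_cases hxt : x ∈ closure t
    · exact Or.inl (by_contra fun h => hfr.ne_of_mem hx ⟨hxt, h⟩ rfl)
    · exact Or.inr hxt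
  obtain ⟨x, hxs, hxt⟩ := hst
  have hint : (s ∩ interior t).Nonempty :=
    ⟨x, hxs, ((hcover hxs).resolve_right (not_not.2 (subset_closure hxt)))⟩
  exact (hs.subset_left_of_subset_union isOpen_interior isClosed_closure.isOpen_compl
    (disjoint_compl_right.mono_left interior_subset_closure) hcover hint).trans interior_subset

theorem Ioo_zero_one_subset_of_frontier_subset {T : Set ℝ} (hT : Bornology.IsBounded T)
    (hfr : frontier T ⊆ {0, 1}) {r : ℝ} (hr : r ∈ T) (hr0 : r ≠ 0) (hr1 : r ≠ 1) :
    Ioo 0 1 ⊆ T := by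
  have hdisj : ∀ {s : Set ℝ}, 0 ∉ s → 1 ∉ s → Disjoint s (frontier T) := fun h0 h1 =>
    disjoint_left.2 fun x hx hxT => by rcases hfr hxT with rfl | rfl <;> contradiction
  have hr0' : 0 < r := by
    by_contra! h
    exact not_bddBelow_Iio 0 <| hT.bddBelow.mono <|
      isPreconnected_Iio.subset_of_disjoint_frontier ⟨r, lt_of_le_of_ne h hr0, hr⟩
        (hdisj (by simp) (by simp))
  have hr1' : r < 1 := by
    by_contra! h
    exact not_bddAbove_Ioi 1 <| hT.bddAbove.mono <|
      isPreconnected_Ioi.subset_of_disjoint_frontier ⟨r, lt_of_le_of_ne' h hr1, hr⟩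
        (hdisj (by simp) (by simp))
  exact isPreconnected_Ioo.subset_of_disjoint_frontier ⟨r, ⟨hr0', hr1'⟩, hr⟩
    (hdisj (by simp) (by simp))

theorem isBounded_preimage_lineMap {E : Type*} [NormedAddCommGroup E] [NormedSpace ℝ E]
    {K : Set E} (hK : Bornology.IsBounded K) {a c : E} (hac : a ≠ c) :
    Bornology.IsBounded (lineMap a c ⁻¹' K : Set ℝ) := by
  obtain ⟨R, hR⟩ := hK.subset_closedBall a
  refine (isBounded_closedBall (x := 0) (r := R / dist a c)).subset fun r hr => ?_
  have h := hR hr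
  rw [mem_closedBall, dist_lineMap_left] at h
  rw [mem_closedBall, dist_zero_right, le_div_iff₀ (dist_pos.2 hac)]
  exact h

theorem segment_subset_of_frontier_inter_line_subset {E : Type*} [NormedAddCommGroup E]
    [NormedSpace ℝ E] {K : Set E} (hK : Bornology.IsBounded K) {a c x : E} (hac : a ≠ c)
    (ha : a ∈ K) (hc : c ∈ K) (hx : x ∈ K) (hxl : x ∈ line[ℝ, a, c]) (hxa : x ≠ a) (hxc : x ≠ c)
    (hfr : ∀ y ∈ frontier K, y ∈ line[ℝ, a, c] → y = a ∨ y = c) : segment ℝ a c ⊆ K := by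
  have hinj := lineMap_injective ℝ hac
  have hfrT : frontier (lineMap a c ⁻¹' K : Set ℝ) ⊆ {0, 1} := fun r hr => by
    rcases hfr _ (lineMap_continuous.frontier_preimage_subset K hr)
      (mem_affineSpan_pair_iff_exists_lineMap_eq.2 ⟨r, rfl⟩) with h | h
    · exact Or.inl (hinj (h.trans (lineMap_apply_zero a c).symm))
    · exact Or.inr (hinj (h.trans (lineMap_apply_one a c).symm))
  obtain ⟨r, rfl⟩ := mem_affineSpan_pair_iff_exists_lineMap_eq.1 hxl
  have hIoo := Ioo_zero_one_subset_of_frontier_subset (isBounded_preimage_lineMap hK hac) hfrT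
    hx (fun h => hxa (by rw [h, lineMap_apply_zero])) (fun h => hxc (by rw [h, lineMap_apply_one]))
  rw [segment_eq_image_lineMap]
  rintro _ ⟨u, hu, rfl⟩
  rcases eq_endpoints_or_mem_Ioo_of_mem_Icc hu with rfl | rfl | hu
  · rwa [lineMap_apply_zero]
  · rwa [lineMap_apply_one]
  · exact hIoo hu

theorem mem_affineSpan_pair_of_apply_eq {K E : Type*} [Field K] [AddCommGroup E] [Module K E]
    (hE : Module.finrank K E = 2) {f : Module.Dual K E} (hf : f ≠ 0) {a c x : E} (hac : a ≠ c)
    (hfa : f a = f x) (hfc : f c = f x) : x ∈ line[K, a, c] := by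
  have : FiniteDimensional K E := Module.finite_of_finrank_eq_succ hE
  have hker : Module.finrank K (LinearMap.ker f) = 1 := by
    have := Module.Dual.finrank_ker_add_one_of_ne_zero hf
    omega
  have hca : (⟨c - a, by simp [hfa, hfc]⟩ : LinearMap.ker f) ≠ 0 := by
    simpa [Subtype.ext_iff, sub_eq_zero] using hac.symm
  obtain ⟨r, hr⟩ := (finrank_eq_one_iff_of_nonzero' _ hca).1 hker ⟨x - a, by simp [hfa]⟩
  refine mem_affineSpan_pair_iff_exists_lineMap_eq.2 ⟨r, ?_⟩
  rw [lineMap_apply_module', ← eq_sub_iff_add_eq]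
  exact congrArg Subtype.val hr

theorem exists_mem_frontier_apply_gt_of_mem_interior {E : Type*} [NormedAddCommGroup E]
    [NormedSpace ℝ E] {K : Set E} (hK : IsCompact K) {f : E →L[ℝ] ℝ} (hf : f ≠ 0) {x : E}
    (hx : x ∈ interior K) : ∃ y ∈ frontier K, f x < f y := by
  have hnotMax : ∀ z ∈ interior K, ¬ IsMaxOn f K z := fun z hz h =>
    hf ((h.isLocalMax (mem_interior_iff_mem_nhds.1 hz)).hasFDerivAt_eq_zero f.hasFDerivAt)
  obtain ⟨y, hyK, hy⟩ := hK.exists_isMaxOn ⟨x, interior_subset hx⟩ f.continuous.continuousOn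
  refine ⟨y, ⟨subset_closure hyK, fun h => hnotMax y h hy⟩, ?_⟩
  exact (hy (interior_subset hx)).lt_of_ne fun h =>
    hnotMax x hx (isMaxOn_iff.2 fun z hz => h ▸ hy hz)

section LevelPoint

variable {E : Type*} [NormedAddCommGroup E] [NormedSpace ℝ E] (f : E →L[ℝ] ℝ) (p q : E)

/-- The point of the line through `q` and `p` at which `f` takes the value `s`. -/
def levelPoint (s : ℝ) : E := lineMap q p ((f q - s) / (f q - f p))

variable {f p q}

theorem apply_levelPoint (hpq : f p ≠ f q) (s : ℝ) : f (levelPoint f p q s) = s := by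
  have : f q - f p ≠ 0 := sub_ne_zero.2 hpq.symm
  simp only [levelPoint, lineMap_apply_module', map_add, map_smul, map_sub, smul_eq_mul]
  field_simp
  ring

theorem levelPoint_apply_right : levelPoint f p q (f q) = q := by
  simp [levelPoint]

theorem continuous_levelPoint : Continuous (levelPoint f p q) :=
  lineMap_continuous.comp (by fun_prop)

theorem levelPoint_mem_segment {s : ℝ} (hp : f p < s) (hq : s ≤ f q) :
    levelPoint f p q s ∈ segment ℝ q p :=
  lineMap_mem_segment ℝ q p ⟨div_nonneg (by linarith) (by linarith),
    (div_le_one (by linarith)).2 (by linarith)⟩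

theorem eq_levelPoint_of_mem_segment (hpq : f p ≠ f q) {x : E} (hx : x ∈ segment ℝ q p) :
    x = levelPoint f p q (f x) := by
  have : f q - f p ≠ 0 := sub_ne_zero.2 hpq.symm
  rw [segment_eq_image_lineMap] at hx
  obtain ⟨θ, -, rfl⟩ := hx
  simp only [levelPoint, lineMap_apply_module', map_add, map_smul, map_sub, smul_eq_mul]
  congr 2
  field_simp
  ring

end LevelPoint

namespace SimplePolygon

variable (P : SimplePolygon)

instance : NeZero P.n :=
  ⟨by have := P.three_le; omega⟩

instance : Nontrivial (ZMod P.n) :=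
  ZMod.nontrivial_iff.2 (by have := P.three_le; omega)

theorem segment_subset_frontier (i : ZMod P.n) :
    segment ℝ (P.vertex i) (P.vertex (i + 1)) ⊆ frontier P.carrier :=
  P.frontier_eq ▸ subset_iUnion (fun j => segment ℝ (P.vertex j) (P.vertex (j + 1))) i

theorem frontier_subset_carrier : frontier P.carrier ⊆ P.carrier :=
  P.isCompact.isClosed.frontier_subset

variable {P} (f : Plane →L[ℝ] ℝ)

theorem apply_le_of_mem_frontier {m : ℝ} (hm : ∀ i, f (P.vertex i) ≤ m) {x : Plane}
    (hx : x ∈ frontier P.carrier) : f x ≤ m := by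
  rw [P.frontier_eq] at hx
  obtain ⟨i, hi⟩ := mem_iUnion.1 hx
  exact ((f : Plane →ₗ[ℝ] ℝ).convexOn convex_univ).le_on_segment trivial trivial hi |>.trans
    (max_le (hm i) (hm (i + 1)))

theorem apply_lt_of_mem_interior {i : ZMod P.n} (hmax : ∀ j, f (P.vertex j) ≤ f (P.vertex i))
    (hf0 : f ≠ 0) {x : Plane} (hx : x ∈ interior P.carrier) : f x < f (P.vertex i) := by
  obtain ⟨y, hy, hxy⟩ := exists_mem_frontier_apply_gt_of_mem_interior P.isCompact hf0 hx
  exact hxy.trans_le (apply_le_of_mem_frontier f hmax hy)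

theorem eq_levelPoint_of_mem_frontier {i : ZMod P.n} {x : Plane}
    (hf : ∀ j ≠ i, f (P.vertex j) < f x) (hxi : f x < f (P.vertex i))
    (hx : x ∈ frontier P.carrier) :
    x = levelPoint f (P.vertex (i - 1)) (P.vertex i) (f x) ∨
      x = levelPoint f (P.vertex (i + 1)) (P.vertex i) (f x) := by
  rw [P.frontier_eq] at hx
  obtain ⟨j, hj⟩ := mem_iUnion.1 hx
  by_cases hprev : j = i - 1
  · subst hprev
    rw [sub_add_cancel, segment_symm] at hj
    exact Or.inl (eq_levelPoint_of_mem_segment ((hf _ (pred_ne_self i)).trans hxi).ne hj)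
  by_cases hcur : j = i
  · subst hcur
    exact Or.inr (eq_levelPoint_of_mem_segment ((hf _ (succ_ne_self j)).trans hxi).ne hj)
  have hnext : j + 1 ≠ i := fun h => hprev (eq_sub_of_add_eq h)
  have := ((f : Plane →ₗ[ℝ] ℝ).convexOn convex_univ).le_on_segment trivial trivial hj
  exact absurd this (not_le.2 (max_lt (hf j hcur) (hf _ hnext)))

theorem segment_levelPoint_subset_carrier {i : ZMod P.n} {x : Plane}
    (hf : ∀ j ≠ i, f (P.vertex j) < f x) (hxi : f x < f (P.vertex i))
    (hx : x ∈ interior P.carrier) :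
    segment ℝ (levelPoint f (P.vertex (i - 1)) (P.vertex i) (f x))
      (levelPoint f (P.vertex (i + 1)) (P.vertex i) (f x)) ⊆ P.carrier := by
  set a := levelPoint f (P.vertex (i - 1)) (P.vertex i) (f x)
  set c := levelPoint f (P.vertex (i + 1)) (P.vertex i) (f x)
  have hprev := hf _ (pred_ne_self i)
  have hnext := hf _ (succ_ne_self i)
  have hfa : f a = f x := apply_levelPoint (hprev.trans hxi).ne _
  have hfc : f c = f x := apply_levelPoint (hnext.trans hxi).ne _
  have ha : a ∈ segment ℝ (P.vertex (i - 1)) (P.vertex i) := by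
    rw [segment_symm]
    exact levelPoint_mem_segment hprev hxi.le
  have hc : c ∈ segment ℝ (P.vertex i) (P.vertex (i + 1)) :=
    levelPoint_mem_segment hnext hxi.le
  have hac : a ≠ c := by
    intro h
    have hadj := P.edges_adjacent (i - 1)
    rw [sub_add_cancel, show i - 1 + 2 = i + 1 by ring] at hadj
    have : a = P.vertex i := hadj.subset ⟨ha, h ▸ hc⟩
    exact hxi.ne (hfa ▸ congrArg f this)
  have hafr : a ∈ frontier P.carrier :=
    P.segment_subset_frontier (i - 1) (by rwa [sub_add_cancel])
  have hcfr : c ∈ frontier P.carrier := P.segment_subset_frontier i hc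
  have hxfr : x ∉ frontier P.carrier := fun h => h.2 hx
  have hf0 : (f : Plane →ₗ[ℝ] ℝ) ≠ 0 := fun h =>
    hprev.ne (sub_eq_zero.1 (by simpa using LinearMap.congr_fun h (P.vertex (i - 1) - x)))
  refine segment_subset_of_frontier_inter_line_subset P.isCompact.isBounded hac
    (P.frontier_subset_carrier hafr) (P.frontier_subset_carrier hcfr) (interior_subset hx)
    (mem_affineSpan_pair_of_apply_eq finrank_euclideanSpace_fin hf0 hac hfa hfc)
    (fun h => hxfr (h ▸ hafr)) (fun h => hxfr (h ▸ hcfr)) fun y hy hyl => ?_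
  obtain ⟨r, rfl⟩ := mem_affineSpan_pair_iff_exists_lineMap_eq.1 hyl
  have hfy : f (lineMap a c r) = f x := by
    simp [lineMap_apply_module', hfa, hfc]
  have := eq_levelPoint_of_mem_frontier f (hfy ▸ hf) (hfy ▸ hxi) hy
  rwa [hfy] at this

theorem not_isReflexAt_of_forall_lt {i : ZMod P.n}
    (hf : ∀ j ≠ i, f (P.vertex j) < f (P.vertex i)) : ¬ P.IsReflexAt i := by
  rintro ⟨δ, hδ, hreflex⟩
  have hf0 : f ≠ 0 := fun h => by simpa [h] using hf _ (succ_ne_self i)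
  have hmax : ∀ j, f (P.vertex j) ≤ f (P.vertex i) := fun j =>
    (eq_or_ne j i).elim (fun h => h ▸ le_rfl) fun h => (hf j h).le
  have hVi : P.vertex i ∈ closure (interior P.carrier) :=
    P.regular ▸ P.frontier_subset_carrier (P.segment_subset_frontier i (left_mem_segment _ _ _))
  have hlevels : ∃ᶠ s in 𝓝[<] f (P.vertex i), s ∈ f '' interior P.carrier := by
    rw [frequently_nhdsWithin_iff]
    refine (mem_closure_iff_frequently.1 (image_closure_subset_closure_image f.continuous
      (mem_image_of_mem f hVi))).mono ?_
    rintro _ ⟨x, hx, rfl⟩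
    exact ⟨⟨x, hx, rfl⟩, apply_lt_of_mem_interior f hmax hf0 hx⟩
  have hnear : ∀ p : Plane, ∀ᶠ s in 𝓝[<] f (P.vertex i),
      dist (levelPoint f p (P.vertex i) s) (P.vertex i) < δ := fun p =>
    nhdsWithin_le_nhds <| (levelPoint_apply_right (p := p) ▸
      continuous_levelPoint.tendsto (f (P.vertex i))).eventually (ball_mem_nhds _ hδ)
  have hbelow : ∀ᶠ s in 𝓝[<] f (P.vertex i), ∀ j ≠ i, f (P.vertex j) < s :=
    nhdsWithin_le_nhds <| eventually_all.2 fun j => by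
      by_cases hj : j = i
      · exact .of_forall fun _ h => absurd hj h
      · exact (eventually_gt_nhds (hf j hj)).mono fun _ hs _ => hs
  obtain ⟨_, ⟨x, hx, rfl⟩, hxa, hxc, hlt⟩ :=
    (hlevels.and_eventually ((hnear _).and ((hnear _).and hbelow))).exists
  have hxi := apply_lt_of_mem_interior f hmax hf0 hx
  have hprev := hlt _ (pred_ne_self i)
  have hnext := hlt _ (succ_ne_self i)
  refine hreflex _ ?_ _ (levelPoint_mem_segment hnext hxi.le) ?_ ?_ hxa hxc
    (segment_levelPoint_subset_carrier f hlt hxi hx)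
  · rw [segment_symm]
    exact levelPoint_mem_segment hprev hxi.le
  · exact fun h => hxi.ne (apply_levelPoint (hprev.trans hxi).ne (f x) ▸ congrArg f h)
  · exact fun h => hxi.ne (apply_levelPoint (hnext.trans hxi).ne (f x) ▸ congrArg f h)

end SimplePolygon

/-- If `Q = (a,b,c,d)` is a simple quadrilateral and the
vertex `b` is reflex, then `b` lies in the convex hull of the other three
vertices.  (Here `a, b, c, d` are `Q.vertex 0, 1, 2, 3`.) -/
theorem reflex_vertex_mem_convexHull (Q : SimplePolygon) (hn : Q.n = 4)
    (hreflex : Q.IsReflexAt 1) :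
    Q.vertex 1 ∈ convexHull ℝ {Q.vertex 0, Q.vertex 2, Q.vertex 3} := by
  by_contra hmem
  obtain ⟨f, t, hhull, hft⟩ := geometric_hahn_banach_closed_point (convex_convexHull ℝ _)
    ((toFinite _).isClosed_convexHull (𝕜 := ℝ)) hmem
  have hothers : ∀ j : ZMod Q.n, j ≠ 1 → j = 0 ∨ j = 2 ∨ j = 3 := by
    generalize Q.n = m at hn ⊢
    subst hn
    decide
  refine Q.not_isReflexAt_of_forall_lt f (fun j hj => ?_) hreflex
  refine (hhull _ (subset_convexHull ℝ _ ?_)).trans hft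
  rcases hothers j hj with rfl | rfl | rfl <;> simp
end
end
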